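/- Let U be the weighted unilateral shift on H = ℓ²(ℕ,ℂ) with U e_n = √(1−q^{n+1}) e_{n+1}. Then the commutator U U* − U* U is a compact operator on H, and the closed star-subalgebra of bounded operators on H generated by U contains every compact operator on H. -/

import Mathlib

/-!
In the basis `e n`, both `U*U` and `UU*` are diagonal, with eigenvalues `1 - q^(n+1)` and
`1 - q^n`, so the commutator is diagonal with eigenvalues `q^(n+1) - q^n → 0` and hence a norm
limit of finite-rank operators. For the second part, `q⁻¹ (1 - U*U)` is diagonal with
eigenvalues `qⁿ`, so its powers converge in norm to the projection `|e₀⟩⟨e₀|`, and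
`Uⁱ |e₀⟩⟨e₀| U*ʲ` is a nonzero multiple of `|eᵢ⟩⟨eⱼ|`. Finally, a compact `K` is the norm limit
of `Pₛ K`, where `Pₛ` are the coordinate projections: they are contractions converging strongly
to the identity, hence uniformly on the relatively compact set `K(ball)`.
-/

open MeasureTheory InnerProductSpace

noncomputable section

/-- `H = ℓ²(ℕ, ℂ)`. -/
abbrev H : Type := lp (fun _ : ℕ => ℂ) 2

/-- The standard orthonormal basis `e n` of `ℓ²(ℕ, ℂ)`. -/
noncomputable def e (n : ℕ) : H := lp.single 2 n 1

open Filter Topology ContinuousLinearMap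

theorem tendsto_comp_of_isCompactOperator {𝕜 E F ι : Type*} [RCLike 𝕜]
    [NormedAddCommGroup E] [NormedSpace 𝕜 E] [NormedAddCommGroup F] [NormedSpace 𝕜 F]
    {P : ι → F →L[𝕜] F} {l : Filter ι} (hP : ∀ i, ‖P i‖ ≤ 1)
    (hPy : ∀ y, Tendsto (fun i => P i y) l (𝓝 y)) {K : E →L[𝕜] F}
    (hK : IsCompactOperator K) : Tendsto (fun i => P i ∘L K) l (𝓝 K) := by
  set S := closure (K '' Metric.closedBall 0 1)
  have : CompactSpace S :=
    isCompact_iff_compactSpace.mp (hK.isCompact_closure_image_closedBall 1)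
  have hequi : Equicontinuous fun i (y : S) => P i y :=
    (LipschitzWith.uniformEquicontinuous _ _ fun i =>
      ((P i).lipschitz.weaken (mod_cast hP i : ‖P i‖₊ ≤ 1)).comp
        (LipschitzWith.subtype_val S)).equicontinuous
  -- Ascoli: on a compact set, pointwise convergence of an equicontinuous family is uniform.
  have hunif : TendstoUniformly (fun i (y : S) => P i y) Subtype.val l :=
    UniformFun.tendsto_iff_tendstoUniformly.mp <|
      (hequi.tendsto_uniformFun_iff_pi l _).mpr (tendsto_pi_nhds.mpr fun y => hPy y)
  rw [Metric.tendsto_nhds]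
  intro ε hε
  filter_upwards [Metric.tendstoUniformly_iff.mp hunif (ε / 2) (half_pos hε)] with i hi
  rw [dist_eq_norm]
  refine lt_of_le_of_lt (opNorm_le_of_unit_norm (half_pos hε).le fun x hx => ?_)
    (half_lt_self hε)
  have hKx : K x ∈ S := subset_closure ⟨x, by simp [hx], rfl⟩
  simpa [dist_eq_norm'] using (hi ⟨K x, hKx⟩).le

theorem isCompactOperator_rankOne {𝕜 E F : Type*} [RCLike 𝕜] [NormedAddCommGroup E]
    [InnerProductSpace 𝕜 E] [NormedAddCommGroup F] [NormedSpace 𝕜 F] (x : F) (y : E) :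
    IsCompactOperator (rankOne 𝕜 x y) :=
  (isCompactOperator_of_locallyCompactSpace_dom (innerSL 𝕜 y)).clm_comp (toSpanSingleton 𝕜 x)

namespace HilbertBasis

variable {ι 𝕜 E : Type*} [RCLike 𝕜] [NormedAddCommGroup E] [InnerProductSpace 𝕜 E]
  (b : HilbertBasis ι 𝕜 E)

def IsDiagonal (T : E →L[𝕜] E) (μ : ι → 𝕜) : Prop := ∀ i, T (b i) = μ i • b i

variable {b} {T S : E →L[𝕜] E} {μ ν : ι → 𝕜}

namespace IsDiagonal

theorem repr_apply (hT : b.IsDiagonal T μ) (x : E) (i : ι) :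
    b.repr (T x) i = μ i * b.repr x i := by
  classical
  have hsum := ((b.hasSum_repr x).mapL T).mapL (innerSL 𝕜 (b i))
  have hterm : (fun j => innerSL 𝕜 (b i) (T (b.repr x j • b j)))
      = fun j => if j = i then μ i * b.repr x i else 0 := by
    ext j
    rw [map_smul, hT, innerSL_apply_apply, inner_smul_right, inner_smul_right,
      orthonormal_iff_ite.mp b.orthonormal]
    by_cases h : j = i
    · subst h; simp [mul_comm]
    · simp [h, Ne.symm h]
  rw [hterm] at hsum
  rw [b.repr_apply_apply, ← innerSL_apply_apply, hsum.unique (hasSum_ite_eq i _)]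

theorem norm_le (hT : b.IsDiagonal T μ) {C : ℝ} (hC : 0 ≤ C) (hμ : ∀ i, ‖μ i‖ ≤ C) :
    ‖T‖ ≤ C := by
  refine opNorm_le_bound _ hC fun x => ?_
  have hcoord : ∀ i, ‖b.repr (T x) i‖ ≤ ‖(C • b.repr x) i‖ := fun i => by
    rw [hT.repr_apply, lp.coeFn_smul, Pi.smul_apply, norm_mul, norm_smul, Real.norm_of_nonneg hC]
    exact mul_le_mul_of_nonneg_right (hμ i) (norm_nonneg _)
  calc ‖T x‖ = ‖b.repr (T x)‖ := (b.repr.norm_map _).symm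
    _ ≤ ‖C • b.repr x‖ := lp.norm_mono two_ne_zero hcoord
    _ = C * ‖x‖ := by rw [norm_smul, Real.norm_of_nonneg hC, b.repr.norm_map]

theorem one : b.IsDiagonal 1 1 := fun i => by simp

theorem sub (hT : b.IsDiagonal T μ) (hS : b.IsDiagonal S ν) :
    b.IsDiagonal (T - S) (μ - ν) := fun i => by simp [hT i, hS i, sub_smul]

theorem smul (hT : b.IsDiagonal T μ) (c : 𝕜) : b.IsDiagonal (c • T) (c • μ) :=
  fun i => by simp [hT i, smul_smul]

theorem mul (hT : b.IsDiagonal T μ) (hS : b.IsDiagonal S ν) :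
    b.IsDiagonal (T * S) (μ * ν) := fun i => by
  simp [hT i, hS i, smul_smul, mul_comm]

theorem pow (hT : b.IsDiagonal T μ) (k : ℕ) : b.IsDiagonal (T ^ k) (μ ^ k) := by
  induction k with
  | zero => simpa using one
  | succ k ih => simpa [pow_succ] using ih.mul hT

end IsDiagonal

variable (b) in
def truncation (s : Finset ι) : E →L[𝕜] E := ∑ i ∈ s, rankOne 𝕜 (b i) (b i)

theorem truncation_apply (s : Finset ι) (x : E) :
    b.truncation s x = ∑ i ∈ s, b.repr x i • b i := by
  simp [truncation, b.repr_apply_apply]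

theorem isDiagonal_truncation [DecidableEq ι] (s : Finset ι) :
    b.IsDiagonal (b.truncation s) (fun i => if i ∈ s then 1 else 0) := fun j => by
  rw [truncation_apply, b.repr_self]
  simp [lp.single_apply, Pi.single_apply, Finset.sum_ite_eq']

theorem tendsto_truncation (x : E) : Tendsto (fun s => b.truncation s x) atTop (𝓝 x) := by
  simp_rw [truncation_apply]
  exact b.hasSum_repr x

theorem norm_truncation_le (s : Finset ι) : ‖b.truncation s‖ ≤ 1 := by
  classical
  refine (isDiagonal_truncation s).norm_le zero_le_one fun i => ?_
  split_ifs <;> simp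

theorem isCompactOperator_truncation (s : Finset ι) : IsCompactOperator (b.truncation s) :=
  (compactOperator (RingHom.id 𝕜) E E).sum_mem fun i _ => isCompactOperator_rankOne (b i) (b i)

theorem IsDiagonal.isCompactOperator [CompleteSpace E]
    (hT : b.IsDiagonal T μ) (hμ : Tendsto μ cofinite (𝓝 0)) : IsCompactOperator T := by
  classical
  refine isCompactOperator_of_tendsto (l := atTop) (F := fun s => T * b.truncation s) ?_
    (Eventually.of_forall fun s => (isCompactOperator_truncation s).clm_comp T)
  rw [Metric.tendsto_atTop]
  intro ε hε
  have hfin : {i | ¬ ‖μ i‖ < ε / 2}.Finite := by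
    simpa [dist_eq_norm] using Metric.tendsto_nhds.mp hμ (ε / 2) (half_pos hε)
  refine ⟨hfin.toFinset, fun s hs => ?_⟩
  rw [dist_eq_norm]
  refine lt_of_le_of_lt (((hT.mul (isDiagonal_truncation s)).sub hT).norm_le (half_pos hε).le
    fun i => ?_) (half_lt_self hε)
  by_cases hi : i ∈ s
  · simp [hi, (half_pos hε).le]
  · have : ‖μ i‖ < ε / 2 := by
      by_contra h
      exact hi (hs (hfin.mem_toFinset.mpr h))
    simpa [hi] using this.le

theorem IsDiagonal.tendsto_pow (hT : b.IsDiagonal T μ) {i₀ : ι}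
    (h₀ : μ i₀ = 1) {r : ℝ} (hr₀ : 0 ≤ r) (hr : r < 1) (hμ : ∀ i ≠ i₀, ‖μ i‖ ≤ r) :
    Tendsto (T ^ ·) atTop (𝓝 (rankOne 𝕜 (b i₀) (b i₀))) := by
  classical
  have hP := isDiagonal_truncation (b := b) {i₀}
  rw [truncation, Finset.sum_singleton] at hP
  rw [tendsto_iff_norm_sub_tendsto_zero]
  refine squeeze_zero (fun _ => norm_nonneg _) (fun k => ((hT.pow k).sub hP).norm_le
    (pow_nonneg hr₀ k) fun i => ?_) (tendsto_pow_atTop_nhds_zero_of_lt_one hr₀ hr)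
  by_cases hi : i = i₀
  · subst hi; simp [h₀, pow_nonneg hr₀]
  · simpa [hi, norm_pow] using pow_le_pow_left₀ (norm_nonneg _) (hμ i hi) k

theorem mem_of_isCompactOperator [CompleteSpace E] {A : Submodule 𝕜 (E →L[𝕜] E)}
    (hA : IsClosed (A : Set (E →L[𝕜] E))) (hb : ∀ i j, rankOne 𝕜 (b i) (b j) ∈ A)
    {K : E →L[𝕜] E} (hK : IsCompactOperator K) : K ∈ A := by
  have hrankOne (i : ι) (y : E) : rankOne 𝕜 (b i) y ∈ A := by
    let S : Submodule 𝕜 E := A.comap (rankOne 𝕜 (b i)).toLinearMap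
    have hspan : Submodule.span 𝕜 (Set.range b) ≤ S :=
      Submodule.span_le.mpr (by rintro _ ⟨j, rfl⟩; exact hb i j)
    have hS : IsClosed (S : Set E) := hA.preimage (rankOne 𝕜 (b i)).continuous
    have := Submodule.topologicalClosure_minimal _ hspan hS
    rw [b.dense_span] at this
    exact this Submodule.mem_top
  have hmem (s : Finset ι) : b.truncation s ∘L K ∈ A := by
    rw [← mul_def, truncation, Finset.sum_mul]
    exact Submodule.sum_mem _ fun i _ => by rw [mul_def, rankOne_comp]; exact hrankOne i _
  exact hA.mem_of_tendsto
    (tendsto_comp_of_isCompactOperator norm_truncation_le tendsto_truncation hK)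
    (Eventually.of_forall hmem)

end HilbertBasis

def stdBasis : HilbertBasis ℕ ℂ H := ⟨LinearIsometryEquiv.refl ℂ H⟩

@[simp] theorem stdBasis_apply (n : ℕ) : stdBasis n = e n := by
  rw [← HilbertBasis.repr_symm_single]; rfl

theorem inner_e_e (m n : ℕ) : inner ℂ (e m) (e n) = if m = n then 1 else 0 := by
  simpa using orthonormal_iff_ite.mp stdBasis.orthonormal m n

theorem ext_e {x y : H} (h : ∀ m, inner ℂ (e m) x = inner ℂ (e m) y) : x = y :=
  stdBasis.repr.injective <| lp.ext <| funext fun m => by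
    simpa [HilbertBasis.repr_apply_apply] using h m

def IsWeightedShift (w : ℕ → ℝ) (U : H →L[ℂ] H) : Prop := ∀ n, U (e n) = (w n : ℂ) • e (n + 1)

namespace IsWeightedShift

variable {U : H →L[ℂ] H} {w : ℕ → ℝ} {q : ℝ}

theorem adjoint_apply_e_zero (hU : IsWeightedShift w U) : adjoint U (e 0) = 0 :=
  ext_e fun m => by rw [adjoint_inner_right, hU, inner_smul_left, inner_e_e]; simp

theorem adjoint_apply_e_succ (hU : IsWeightedShift w U) (n : ℕ) :
    adjoint U (e (n + 1)) = (w n : ℂ) • e n :=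
  ext_e fun m => by
    rw [adjoint_inner_right, hU, inner_smul_left, inner_smul_right, inner_e_e, inner_e_e]
    by_cases h : m = n
    · simp [h]
    · simp [h]

theorem pow_apply_e_zero (hU : IsWeightedShift w U) (j : ℕ) :
    (U ^ j) (e 0) = ((∏ k ∈ Finset.range j, w k : ℝ) : ℂ) • e j := by
  induction j with
  | zero => simp
  | succ j ih =>
    rw [pow_succ', mul_def, comp_apply, ih, map_smul, hU, smul_smul, Finset.prod_range_succ]
    push_cast
    ring_nf

theorem rankOne_mem (hU : IsWeightedShift w U) (hw : ∀ n, w n ≠ 0)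
    {A : StarSubalgebra ℂ (H →L[ℂ] H)} (hUA : U ∈ A) (h₀ : rankOne ℂ (e 0) (e 0) ∈ A)
    (i j : ℕ) : rankOne ℂ (e i) (e j) ∈ A := by
  set c : ℕ → ℝ := fun j => ∏ k ∈ Finset.range j, w k
  have hc (j : ℕ) : c j ≠ 0 := Finset.prod_ne_zero_iff.mpr fun k _ => hw k
  have hfactor : U ^ i * rankOne ℂ (e 0) (e 0) * star (U ^ j)
      = ((c i * c j : ℝ) : ℂ) • rankOne ℂ (e i) (e j) := by
    rw [star_eq_adjoint, mul_def, mul_def, comp_rankOne, rankOne_comp, adjoint_adjoint,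
      hU.pow_apply_e_zero, hU.pow_apply_e_zero]
    simp [c, smul_smul]
  have hmem : U ^ i * rankOne ℂ (e 0) (e 0) * star (U ^ j) ∈ A :=
    mul_mem (mul_mem (pow_mem hUA i) h₀) (star_mem (pow_mem hUA j))
  rw [hfactor] at hmem
  have hcij : ((c i * c j : ℝ) : ℂ) ≠ 0 := mod_cast mul_ne_zero (hc i) (hc j)
  simpa only [inv_smul_smul₀ hcij] using A.smul_mem hmem ((c i * c j : ℝ) : ℂ)⁻¹

theorem isDiagonal_adjoint_mul_self (hU : IsWeightedShift (fun n => √(1 - q ^ (n + 1))) U)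
    (hq0 : 0 ≤ q) (hq1 : q ≤ 1) :
    stdBasis.IsDiagonal (adjoint U * U) fun n => ((1 - q ^ (n + 1) : ℝ) : ℂ) := fun n => by
  rw [stdBasis_apply, mul_def, comp_apply, hU, map_smul, hU.adjoint_apply_e_succ, smul_smul,
    ← Complex.ofReal_mul, Real.mul_self_sqrt (sub_nonneg.mpr (pow_le_one₀ hq0 hq1))]

theorem isDiagonal_mul_adjoint (hU : IsWeightedShift (fun n => √(1 - q ^ (n + 1))) U)
    (hq0 : 0 ≤ q) (hq1 : q ≤ 1) :
    stdBasis.IsDiagonal (U * adjoint U) fun n => ((1 - q ^ n : ℝ) : ℂ)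
  | 0 => by simp [hU.adjoint_apply_e_zero]
  | n + 1 => by
    rw [stdBasis_apply, mul_def, comp_apply, hU.adjoint_apply_e_succ, map_smul, hU, smul_smul,
      ← Complex.ofReal_mul, Real.mul_self_sqrt (sub_nonneg.mpr (pow_le_one₀ hq0 hq1))]

theorem isCompactOperator_commutator (hU : IsWeightedShift (fun n => √(1 - q ^ (n + 1))) U)
    (hq0 : 0 ≤ q) (hq1 : q < 1) : IsCompactOperator (U * adjoint U - adjoint U * U) := by
  refine ((hU.isDiagonal_mul_adjoint hq0 hq1.le).sub
    (hU.isDiagonal_adjoint_mul_self hq0 hq1.le)).isCompactOperator ?_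
  have hq : Tendsto (q ^ ·) atTop (𝓝 0) := tendsto_pow_atTop_nhds_zero_of_lt_one hq0 hq1
  have hdiff : Tendsto (fun n => q ^ (n + 1) - q ^ n) atTop (𝓝 0) := by
    simpa using (hq.comp (tendsto_add_atTop_nat 1)).sub hq
  rw [Nat.cofinite_eq_atTop]
  convert (Complex.continuous_ofReal.tendsto 0).comp hdiff using 1
  · ext n
    simp
  · simp

theorem rankOne_e_zero_mem (hU : IsWeightedShift (fun n => √(1 - q ^ (n + 1))) U)
    (hq0 : 0 < q) (hq1 : q < 1) {A : StarSubalgebra ℂ (H →L[ℂ] H)}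
    (hA : IsClosed (A : Set (H →L[ℂ] H))) (hUA : U ∈ A) : rankOne ℂ (e 0) (e 0) ∈ A := by
  have hT : stdBasis.IsDiagonal ((q : ℂ)⁻¹ • (1 - adjoint U * U))
      fun n => ((q ^ n : ℝ) : ℂ) := by
    convert (HilbertBasis.IsDiagonal.one.sub
      (hU.isDiagonal_adjoint_mul_self hq0.le hq1.le)).smul (q : ℂ)⁻¹ using 1
    ext n
    simp [pow_succ, mul_comm, hq0.ne']
  have hTA : (q : ℂ)⁻¹ • (1 - adjoint U * U) ∈ A :=
    A.smul_mem (sub_mem (one_mem A)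
      (mul_mem (by simpa [star_eq_adjoint] using star_mem hUA) hUA)) _
  have hlim := hT.tendsto_pow (i₀ := 0) (by simp) hq0.le hq1 fun n hn => by
    simpa [abs_of_pos hq0] using
      pow_le_pow_of_le_one hq0.le hq1.le (Nat.one_le_iff_ne_zero.mpr hn)
  simpa using hA.mem_of_tendsto hlim (Eventually.of_forall fun k => pow_mem hTA k)

end IsWeightedShift

theorem stmt0 (q : ℝ) (hq0 : 0 < q) (hq1 : q < 1) (U : H →L[ℂ] H)
    (hU : ∀ n : ℕ, U (e n) = (Real.sqrt (1 - q ^ (n + 1)) : ℂ) • e (n + 1)) :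
    IsCompactOperator
      ⇑(U * ContinuousLinearMap.adjoint U - ContinuousLinearMap.adjoint U * U) ∧
    ∀ K : H →L[ℂ] H, IsCompactOperator ⇑K →
      K ∈ (StarAlgebra.adjoin ℂ {U}).topologicalClosure := by
  have hshift : IsWeightedShift (fun n => √(1 - q ^ (n + 1))) U := hU
  refine ⟨hshift.isCompactOperator_commutator hq0.le hq1, fun K hK => ?_⟩
  set A := (StarAlgebra.adjoin ℂ {U}).topologicalClosure
  have hA : IsClosed (A : Set (H →L[ℂ] H)) := StarSubalgebra.isClosed_topologicalClosure _
  have hUA : U ∈ A :=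
    StarSubalgebra.le_topologicalClosure _ (StarAlgebra.self_mem_adjoin_singleton ℂ U)
  have hw (n : ℕ) : √(1 - q ^ (n + 1)) ≠ 0 :=
    (Real.sqrt_pos.mpr (sub_pos.mpr (pow_lt_one₀ hq0.le hq1 n.succ_ne_zero))).ne'
  refine stdBasis.mem_of_isCompactOperator (A := A.toSubalgebra.toSubmodule) hA
    (fun i j => ?_) hK
  simpa using hshift.rankOne_mem hw hUA (hshift.rankOne_e_zero_mem hq0 hq1 hA hUA) i j

end
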